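/- Let G and H be finite simple graphs with at least 3 vertices each, and define the formal contexts 𝔾 = (V_G, E_G ∪ {{v} : v ∈ V_G} ∪ {∅}, ∈) and ℍ analogously. Then Ext(𝔾) = {{v} : v ∈ V_G} ∪ E_G ∪ {∅, V_G}, where edges are viewed as 2-element vertex sets. (This is the gadget underlying the NP-hardness reduction for full scale-measures.) -/

import Mathlib

def extentOf {G M : Type*} (I : G → M → Prop) (B : Set M) : Set G :=
  {g | ∀ m ∈ B, I g m}

def IsExtent {G M : Type*} (I : G → M → Prop) (X : Set G) : Prop :=
  ∃ B : Set M, X = extentOf I B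

/-- The attribute collection of the graph context: all edges (as 2-element
vertex sets), all singletons, and the empty set. -/
def GraphAttr {V : Type*} (G : SimpleGraph V) (S : Set V) : Prop :=
  (∃ u v : V, G.Adj u v ∧ S = {u, v}) ∨ (∃ v : V, S = {v}) ∨ S = ∅

/-! The attribute family is closed under taking subsets (a subset of an edge is an edge, a
singleton or `∅`). In a membership context with such a family, the intersection of a nonempty
set of attributes lies inside one of them and so is again an attribute; the empty intersection
is `V`. -/

open Set

@[simp]
theorem extentOf_empty {G M : Type*} (I : G → M → Prop) : extentOf I ∅ = univ := by
  simp [extentOf]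

@[simp]
theorem extentOf_singleton {G M : Type*} (I : G → M → Prop) (m : M) :
    extentOf I {m} = {g | I g m} := by
  simp [extentOf]

theorem extentOf_subset_of_mem {G M : Type*} (I : G → M → Prop) {B : Set M} {m : M}
    (hm : m ∈ B) : extentOf I B ⊆ {g | I g m} :=
  fun _ hg => hg m hm

theorem isExtent_mem_iff_of_subset_closed {α : Type*} {P : Set α → Prop}
    (hP : ∀ ⦃S T : Set α⦄, P T → S ⊆ T → P S) (X : Set α) :
    IsExtent (fun (a : α) (S : {S : Set α // P S}) => a ∈ S.val) X ↔ P X ∨ X = univ := by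
  constructor
  · rintro ⟨B, rfl⟩
    rcases B.eq_empty_or_nonempty with rfl | ⟨S, hS⟩
    · exact Or.inr (extentOf_empty _)
    · exact Or.inl (hP S.2 (extentOf_subset_of_mem _ hS))
  · rintro (hX | rfl)
    · exact ⟨{⟨X, hX⟩}, by simp⟩
    · exact ⟨∅, (extentOf_empty _).symm⟩

theorem GraphAttr.of_subset {V : Type*} {G : SimpleGraph V} {S T : Set V}
    (hT : GraphAttr G T) (hST : S ⊆ T) : GraphAttr G S := by
  rcases hT with ⟨u, v, huv, rfl⟩ | ⟨v, rfl⟩ | rfl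
  · rcases subset_pair_iff_eq.mp hST with rfl | rfl | rfl | rfl
    · exact Or.inr (Or.inr rfl)
    · exact Or.inr (Or.inl ⟨u, rfl⟩)
    · exact Or.inr (Or.inl ⟨v, rfl⟩)
    · exact Or.inl ⟨u, v, huv, rfl⟩
  · rcases subset_singleton_iff_eq.mp hST with rfl | rfl
    · exact Or.inr (Or.inr rfl)
    · exact Or.inr (Or.inl ⟨v, rfl⟩)
  · exact Or.inr (Or.inr (subset_empty_iff.mp hST))

theorem graph_context_extents_general {V : Type*}
    (G : SimpleGraph V) :
    ∀ X : Set V,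
      IsExtent (fun (v : V) (S : {S : Set V // GraphAttr G S}) => v ∈ S.val) X ↔
        (∃ v : V, X = {v}) ∨ (∃ u v : V, G.Adj u v ∧ X = {u, v}) ∨
          X = ∅ ∨ X = Set.univ := by
  intro X
  rw [isExtent_mem_iff_of_subset_closed (fun _ _ => GraphAttr.of_subset),
    GraphAttr, or_assoc, or_assoc]
  exact or_left_comm

/-- The formal context `𝔾 = (V_G, E_G ∪ {{v} : v ∈ V_G} ∪ {∅}, ∈)` of a graph
`G` with at least 3 vertices has as extents exactly the singletons, the edges,
`∅` and `V_G`. -/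
theorem graph_context_extents {V : Type*} [Fintype V]
    (G : SimpleGraph V) (hV : 3 ≤ Fintype.card V) :
    ∀ X : Set V,
      IsExtent (fun (v : V) (S : {S : Set V // GraphAttr G S}) => v ∈ S.val) X ↔
        (∃ v : V, X = {v}) ∨ (∃ u v : V, G.Adj u v ∧ X = {u, v}) ∨
          X = ∅ ∨ X = Set.univ :=
  graph_context_extents_general G
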